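/- Let α be irrational with convergents p_n/q_n and z_n = q_nα − p_n, and fix n ≥ 0. Consider the set 𝒳_n = {qα − p : 0 ≤ q < q_{n+1}, p ∈ ℤ} ⊂ ℝ, and let x = qα − p ∈ 𝒳_n (with 0 ≤ q < q_{n+1}). If n is even, then the smallest element of 𝒳_n strictly greater than x is x + |z_n| when q < q_{n+1} − q_n, and x + |z_n| + |z_{n+1}| when q ≥ q_{n+1} − q_n. If n is odd, then the largest element of 𝒳_n strictly less than x is x − |z_n| when q < q_{n+1} − q_n, and x − |z_n| − |z_{n+1}| when q ≥ q_{n+1} − q_n. -/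

import Mathlib

/-- Gauss map iterates of `α`: `x₀ = {α}`, `x_{n+1} = {1/x_n}`. -/
noncomputable def gaussIter (α : ℝ) : ℕ → ℝ
  | 0 => Int.fract α
  | n + 1 => Int.fract (gaussIter α n)⁻¹

/-- `cfa α n` is the partial quotient `a_{n+1} = ⌊1/x_n⌋` of the continued fraction of `α`. -/
noncomputable def cfa (α : ℝ) (n : ℕ) : ℕ := ⌊(gaussIter α n)⁻¹⌋₊

/-- Denominators `q_n` of the continued fraction convergents of `α`:
`q₀ = 1`, `q₁ = a₁`, `q_{n+2} = a_{n+2} q_{n+1} + q_n`. -/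
noncomputable def cfq (α : ℝ) : ℕ → ℕ
  | 0 => 1
  | 1 => cfa α 0
  | n + 2 => cfa α (n + 1) * cfq α (n + 1) + cfq α n

/-- Numerators `p_n` of the continued fraction convergents of `α`:
`p₀ = ⌊α⌋`, `p₁ = a₁⌊α⌋ + 1`, `p_{n+2} = a_{n+2} p_{n+1} + p_n`. -/
noncomputable def cfp (α : ℝ) : ℕ → ℤ
  | 0 => ⌊α⌋
  | 1 => cfa α 0 * ⌊α⌋ + 1
  | n + 2 => cfa α (n + 1) * cfp α (n + 1) + cfp α n

/-- `z_n = q_n α - p_n`. -/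
noncomputable def cfz (α : ℝ) (n : ℕ) : ℝ := (cfq α n : ℝ) * α - (cfp α n : ℝ)

/-- The set `𝒳_n = {qα - p : 0 ≤ q < q_{n+1}, p ∈ ℤ}`. -/
noncomputable def Xset (α : ℝ) (n : ℕ) : Set ℝ :=
  {y | ∃ q' : ℕ, q' < cfq α (n + 1) ∧ ∃ p' : ℤ, y = (q' : ℝ) * α - (p' : ℝ)}

/-!
Write `a = |z_n|`, `b = |z_{n+1}|`. The `z_n` alternate in sign and decrease in absolute value,
and since `p_{n+1} q_n - p_n q_{n+1} = ±1` every `dα - m` with `d, m ∈ ℤ` is an integer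
combination `u z_n + v z_{n+1}` with `d = u q_n + v q_{n+1}`, so that `±(dα - m) = u a - v b`.
When `|d| < q_{n+1}` the coefficients `u` and `v` cannot have the same sign, so a positive value
of `u a - v b` has `u ≥ 1 ≥ 1 + v`: it is at least `a`, and it is below `a + b` only for
`(u, v) = (1, 0)`, i.e. for `d = q_n`. Applied to differences of elements of `𝒳_n` this gives the
gaps, and they are attained by `x + z_n` or `x + z_n - z_{n+1}`.
-/

section GaussMap

variable {α : ℝ}

theorem irrational_gaussIter (hα : Irrational α) : ∀ n, Irrational (gaussIter α n)
  | 0 => by simpa only [gaussIter, ← Int.self_sub_floor] using hα.sub_intCast _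
  | n + 1 => by
    simpa only [gaussIter, ← Int.self_sub_floor] using (irrational_gaussIter hα n).inv.sub_intCast _

theorem gaussIter_nonneg (α : ℝ) : ∀ n, 0 ≤ gaussIter α n
  | 0 => Int.fract_nonneg _
  | _ + 1 => Int.fract_nonneg _

theorem gaussIter_lt_one (α : ℝ) : ∀ n, gaussIter α n < 1
  | 0 => Int.fract_lt_one _
  | _ + 1 => Int.fract_lt_one _

theorem gaussIter_pos (hα : Irrational α) (n : ℕ) : 0 < gaussIter α n :=
  (gaussIter_nonneg α n).lt_of_ne fun h => (irrational_gaussIter hα n).ne_int 0 (by simp [← h])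

theorem gaussIter_succ (α : ℝ) (n : ℕ) :
    gaussIter α (n + 1) = (gaussIter α n)⁻¹ - cfa α n := by
  rw [gaussIter, ← Int.self_sub_floor, cfa,
    natCast_floor_eq_intCast_floor (inv_nonneg.2 (gaussIter_nonneg α n))]

theorem one_le_cfa (hα : Irrational α) (n : ℕ) : 1 ≤ cfa α n :=
  Nat.one_le_floor_iff _ |>.2 <|
    (one_lt_inv₀ (gaussIter_pos hα n)).2 (gaussIter_lt_one α n) |>.le

end GaussMap

section Convergents

variable {α : ℝ}

theorem cfq_le_cfq_succ (hα : Irrational α) : ∀ n, cfq α n ≤ cfq α (n + 1)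
  | 0 => one_le_cfa hα 0
  | n + 1 => by
    show cfq α (n + 1) ≤ cfa α (n + 1) * cfq α (n + 1) + cfq α n
    nlinarith [one_le_cfa hα (n + 1)]

theorem cfp_succ_mul_cfq_sub_cfp_mul_cfq_succ (α : ℝ) :
    ∀ n, cfp α (n + 1) * cfq α n - cfp α n * cfq α (n + 1) = (-1) ^ n
  | 0 => by simp only [cfp, cfq]; push_cast; ring
  | n + 1 => by
    have ih := cfp_succ_mul_cfq_sub_cfp_mul_cfq_succ α n
    simp only [cfp, cfq, Nat.cast_add, Nat.cast_mul] at ih ⊢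
    linear_combination -ih

theorem exists_cfq_cfp_combination (α : ℝ) (n : ℕ) (d m : ℤ) :
    ∃ u v : ℤ, u * cfq α n + v * cfq α (n + 1) = d ∧ u * cfp α n + v * cfp α (n + 1) = m := by
  have hdet := cfp_succ_mul_cfq_sub_cfp_mul_cfq_succ α n
  have hsq : ((-1 : ℤ) ^ n) ^ 2 = 1 := by rw [← pow_mul, mul_comm, pow_mul, neg_one_sq, one_pow]
  refine ⟨(-1) ^ n * (d * cfp α (n + 1) - m * cfq α (n + 1)),
    (-1) ^ n * (m * cfq α n - d * cfp α n), ?_, ?_⟩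
  · linear_combination (-1) ^ n * d * hdet + d * hsq
  · linear_combination (-1) ^ n * m * hdet + m * hsq

theorem cfz_zero (α : ℝ) : cfz α 0 = gaussIter α 0 := by
  simp only [cfz, cfq, cfp, gaussIter, Nat.cast_one, one_mul, Int.self_sub_floor]

theorem cfz_succ (hα : Irrational α) : ∀ n, cfz α (n + 1) = -gaussIter α (n + 1) * cfz α n
  | 0 => by
    have hx := (gaussIter_pos hα 0).ne'
    rw [gaussIter_succ, cfz_zero]
    simp only [cfz, cfq, cfp, gaussIter, Int.fract] at hx ⊢
    push_cast
    field_simp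
    ring
  | n + 1 => by
    have ih := cfz_succ hα n
    have hx := (gaussIter_pos hα (n + 1)).ne'
    have hz : cfz α (n + 2) = cfa α (n + 1) * cfz α (n + 1) + cfz α n := by
      simp only [cfz, cfq, cfp]; push_cast; ring
    rw [hz, gaussIter_succ, ih]
    field_simp
    ring

theorem neg_one_pow_mul_cfz_pos (hα : Irrational α) : ∀ n, 0 < (-1) ^ n * cfz α n
  | 0 => by simpa [cfz_zero] using gaussIter_pos hα 0
  | n + 1 => by
    rw [cfz_succ hα, pow_succ]
    have := mul_pos (neg_one_pow_mul_cfz_pos hα n) (gaussIter_pos hα (n + 1))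
    linarith

theorem abs_cfz (hα : Irrational α) (n : ℕ) : |cfz α n| = (-1) ^ n * cfz α n := by
  rw [← abs_of_pos (neg_one_pow_mul_cfz_pos hα n), abs_mul, abs_neg_one_pow, one_mul]

theorem cfz_eq_neg_one_pow_mul_abs (hα : Irrational α) (n : ℕ) :
    cfz α n = (-1) ^ n * |cfz α n| := by
  rw [abs_cfz hα, ← mul_assoc, ← mul_pow, neg_one_mul, neg_neg, one_pow, one_mul]

theorem abs_cfz_pos (hα : Irrational α) (n : ℕ) : 0 < |cfz α n| :=
  abs_cfz hα n ▸ neg_one_pow_mul_cfz_pos hα n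

theorem abs_cfz_succ_lt (hα : Irrational α) (n : ℕ) : |cfz α (n + 1)| < |cfz α n| := by
  rw [cfz_succ hα, abs_mul, abs_neg, abs_of_pos (gaussIter_pos hα _)]
  exact mul_lt_of_lt_one_left (abs_cfz_pos hα n) (gaussIter_lt_one α _)

end Convergents

theorem one_le_and_nonpos_of_abs_mul_add_mul_lt {Q₁ Q₂ u v : ℤ} {a b : ℝ} (hQ₁ : 0 ≤ Q₁)
    (ha : 0 ≤ a) (hb : 0 ≤ b) (hd : |u * Q₁ + v * Q₂| < Q₂) (hpos : 0 < u * a - v * b) :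
    1 ≤ u ∧ v ≤ 0 := by
  rw [abs_lt] at hd
  rcases le_or_gt u 0 with hu | hu
  · rcases le_or_gt 0 v with hv | hv
    · have : (u : ℝ) ≤ 0 := by exact_mod_cast hu
      have : (0 : ℝ) ≤ v := by exact_mod_cast hv
      nlinarith
    · nlinarith
  · refine ⟨hu, ?_⟩
    by_contra! hv
    nlinarith

theorem abs_cfz_le_and_eq_of_abs_lt {α : ℝ} (hα : Irrational α) {n : ℕ} {d m : ℤ}
    (hd : |d| < cfq α (n + 1)) (hpos : 0 < (-1) ^ n * (d * α - m)) :
    |cfz α n| ≤ (-1) ^ n * (d * α - m) ∧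
      ((-1) ^ n * (d * α - m) < |cfz α n| + |cfz α (n + 1)| → d = cfq α n) := by
  obtain ⟨u, v, rfl, rfl⟩ := exists_cfq_cfp_combination α n d m
  set a := |cfz α n|
  set b := |cfz α (n + 1)|
  have hsq : ((-1 : ℝ) ^ n) ^ 2 = 1 := by rw [← pow_mul, mul_comm, pow_mul, neg_one_sq, one_pow]
  have hval : (-1) ^ n * (((u * cfq α n + v * cfq α (n + 1) : ℤ) : ℝ) * α
      - ((u * cfp α n + v * cfp α (n + 1) : ℤ) : ℝ)) = u * a - v * b := by
    have hz : ((u * cfq α n + v * cfq α (n + 1) : ℤ) : ℝ) * α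
        - ((u * cfp α n + v * cfp α (n + 1) : ℤ) : ℝ) = u * cfz α n + v * cfz α (n + 1) := by
      simp only [cfz]; push_cast; ring
    rw [hz, cfz_eq_neg_one_pow_mul_abs hα n, cfz_eq_neg_one_pow_mul_abs hα (n + 1), pow_succ]
    linear_combination (u * a - v * b) * hsq
  rw [hval] at hpos ⊢
  have ha := abs_cfz_pos hα n
  have hb := abs_cfz_pos hα (n + 1)
  have hba := abs_cfz_succ_lt hα n
  obtain ⟨hu, hv⟩ := one_le_and_nonpos_of_abs_mul_add_mul_lt (Int.natCast_nonneg _) ha.le hb.le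
    hd hpos
  have huR : (1 : ℝ) ≤ u := by exact_mod_cast hu
  have hvR : (v : ℝ) ≤ 0 := by exact_mod_cast hv
  refine ⟨by nlinarith, fun hlt => ?_⟩
  have hv0 : v = 0 := by
    by_contra hne
    have : (v : ℝ) ≤ -1 := by exact_mod_cast (show v ≤ -1 by omega)
    nlinarith
  subst hv0
  have hu1 : u = 1 := by
    by_contra hne
    have : (2 : ℝ) ≤ u := by exact_mod_cast (show 2 ≤ u by omega)
    nlinarith
  simp [hu1]

section Xset

variable {α : ℝ} {n q : ℕ} {p : ℤ}

theorem add_cfz_mem_Xset (h : q + cfq α n < cfq α (n + 1)) :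
    q * α - p + cfz α n ∈ Xset α n :=
  ⟨q + cfq α n, h, p + cfp α n, by simp only [cfz]; push_cast; ring⟩

theorem add_cfz_sub_cfz_mem_Xset (hα : Irrational α) (hq : q < cfq α (n + 1))
    (h : cfq α (n + 1) ≤ q + cfq α n) :
    q * α - p + cfz α n - cfz α (n + 1) ∈ Xset α n := by
  refine ⟨q + cfq α n - cfq α (n + 1), by have := cfq_le_cfq_succ hα n; omega,
    p + cfp α n - cfp α (n + 1), ?_⟩
  simp only [cfz, Nat.cast_sub h]; push_cast; ring

theorem abs_cfz_le_of_mem_Xset (hα : Irrational α) (hq : q < cfq α (n + 1)) {y : ℝ}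
    (hy : y ∈ Xset α n) (hpos : 0 < (-1) ^ n * (y - (q * α - p))) :
    |cfz α n| ≤ (-1) ^ n * (y - (q * α - p)) ∧
      (cfq α (n + 1) ≤ q + cfq α n →
        |cfz α n| + |cfz α (n + 1)| ≤ (-1) ^ n * (y - (q * α - p))) := by
  obtain ⟨q', hq', p', rfl⟩ := hy
  have hdiff : (q' : ℝ) * α - p' - (q * α - p) = ((q' - q : ℤ) : ℝ) * α - ((p' - p : ℤ) : ℝ) := by
    push_cast; ring
  have hd : |(q' - q : ℤ)| < cfq α (n + 1) := by rw [abs_lt]; omega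
  rw [hdiff] at hpos ⊢
  obtain ⟨hle, heq⟩ := abs_cfz_le_and_eq_of_abs_lt hα hd hpos
  exact ⟨hle, fun h => not_lt.1 fun hlt => by have := heq hlt; omega⟩

end Xset

/-- Sharp description of the gaps in the set `𝒳_n`: for `x = qα - p ∈ 𝒳_n`, if `n` is even,
the successor of `x` in `𝒳_n` is `x + |z_n|` when `q < q_{n+1} - q_n` and
`x + |z_n| + |z_{n+1}|` when `q ≥ q_{n+1} - q_n`; if `n` is odd the same holds for the
predecessor with `+` replaced by `-`. -/
theorem statement10 (α : ℝ) (hα : Irrational α) (n : ℕ) (q : ℕ) (p : ℤ)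
    (hq : q < cfq α (n + 1)) :
    (Even n →
      (q + cfq α n < cfq α (n + 1) →
        IsLeast {y ∈ Xset α n | (q : ℝ) * α - (p : ℝ) < y}
          ((q : ℝ) * α - (p : ℝ) + |cfz α n|)) ∧
      (cfq α (n + 1) ≤ q + cfq α n →
        IsLeast {y ∈ Xset α n | (q : ℝ) * α - (p : ℝ) < y}
          ((q : ℝ) * α - (p : ℝ) + |cfz α n| + |cfz α (n + 1)|))) ∧
    (Odd n →
      (q + cfq α n < cfq α (n + 1) →
        IsGreatest {y ∈ Xset α n | y < (q : ℝ) * α - (p : ℝ)}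
          ((q : ℝ) * α - (p : ℝ) - |cfz α n|)) ∧
      (cfq α (n + 1) ≤ q + cfq α n →
        IsGreatest {y ∈ Xset α n | y < (q : ℝ) * α - (p : ℝ)}
          ((q : ℝ) * α - (p : ℝ) - |cfz α n| - |cfz α (n + 1)|))) := by
  have ha := abs_cfz_pos hα n
  have hb := abs_cfz_pos hα (n + 1)
  have hz := cfz_eq_neg_one_pow_mul_abs hα n
  have hz' := cfz_eq_neg_one_pow_mul_abs hα (n + 1)
  have hbound := fun y (hy : y ∈ Xset α n) => abs_cfz_le_of_mem_Xset (p := p) hα hq hy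
  rw [pow_succ] at hz'
  refine ⟨fun hn => ?_, fun hn => ?_⟩
  · simp only [hn.neg_one_pow, one_mul, neg_one_mul] at hz hz' hbound
    refine ⟨fun h => ⟨⟨?_, by linarith⟩, fun y ⟨hy, hxy⟩ => ?_⟩,
      fun h => ⟨⟨?_, by linarith⟩, fun y ⟨hy, hxy⟩ => ?_⟩⟩
    · convert add_cfz_mem_Xset (p := p) h using 1; linarith
    · linarith [(hbound y hy (by linarith)).1]
    · convert add_cfz_sub_cfz_mem_Xset (p := p) hα hq h using 1; linarith
    · linarith [(hbound y hy (by linarith)).2 h]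
  · simp only [hn.neg_one_pow, neg_one_mul, neg_neg] at hz hz' hbound
    refine ⟨fun h => ⟨⟨?_, by linarith⟩, fun y ⟨hy, hxy⟩ => ?_⟩,
      fun h => ⟨⟨?_, by linarith⟩, fun y ⟨hy, hxy⟩ => ?_⟩⟩
    · convert add_cfz_mem_Xset (p := p) h using 1; linarith
    · linarith [(hbound y hy (by linarith)).1]
    · convert add_cfz_sub_cfz_mem_Xset (p := p) hα hq h using 1; linarith
    · linarith [(hbound y hy (by linarith)).2 h]
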